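/- Let (M,d) be a metric space, let a, b ∈ M with d(a,b) = r > 0, and let n ≥ 1 and nonnegative reals α_{ij} for 0 ≤ i < j ≤ n be given. Then there exists an assignment c : {0,…,n} → {a,b} such that (r/2)·Σ_{i<j≤n} α_{ij} ≤ Σ_{i<j≤n} α_{ij}·d(c_i, c_j). -/
import Mathlib

lemma pairsum (m : ℕ) (f : Fin m → Fin m → ℝ) :
    ∑ q ∈ Finset.univ.filter (fun q : Fin m × Fin m => q.1 < q.2), f q.1 q.2
      = ∑ j, ∑ i ∈ Finset.Iio j, f i j := by
  rw [Finset.sum_filter, ← Finset.univ_product_univ, Finset.sum_product_right]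
  refine Finset.sum_congr rfl fun j _ => ?_
  rw [← Finset.sum_filter]
  refine Finset.sum_congr ?_ fun _ _ => rfl
  ext i; simp

lemma splitsum (m : ℕ) (f : Fin (m + 1) → Fin (m + 1) → ℝ) :
    ∑ j : Fin (m + 1), ∑ i ∈ Finset.Iio j, f i j
      = (∑ j : Fin m, ∑ i ∈ Finset.Iio j, f i.castSucc j.castSucc)
        + ∑ i : Fin m, f i.castSucc (Fin.last m) := by
  rw [Fin.sum_univ_castSucc]
  congr 1
  · refine Finset.sum_congr rfl fun j _ => ?_
    rw [Fin.Iio_castSucc, Finset.sum_map]; rfl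
  · rw [Fin.Iio_last_eq_map, Finset.sum_map]; rfl

lemma aux_two_point {M : Type*} [MetricSpace M] (a b : M) (r : ℝ) (hr : 0 < r)
    (hab : dist a b = r) :
    ∀ (n : ℕ) (α : Fin (n + 1) → Fin (n + 1) → ℝ), (∀ i j, 0 ≤ α i j) →
    ∃ c : Fin (n + 1) → M, (∀ i, c i = a ∨ c i = b) ∧
      (r / 2) * ∑ j, ∑ i ∈ Finset.Iio j, α i j
        ≤ ∑ j, ∑ i ∈ Finset.Iio j, α i j * dist (c i) (c j) := by
  intro n
  induction n with
  | zero =>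
    intro α hα
    refine ⟨fun _ => a, fun _ => Or.inl rfl, ?_⟩
    have h0 : (Finset.Iio (0 : Fin 1)) = ∅ := by ext i; simp
    simp [Fin.sum_univ_one, h0]
  | succ n ih =>
    intro α hα
    obtain ⟨c, hc, hle⟩ := ih (fun i j => α i.castSucc j.castSucc) (fun i j => hα _ _)
    set S := ∑ i : Fin (n + 1), α i.castSucc (Fin.last (n + 1)) with hS
    have hkey : r * S ≤
        (∑ i : Fin (n + 1), α i.castSucc (Fin.last (n + 1)) * dist (c i) a)
          + ∑ i : Fin (n + 1), α i.castSucc (Fin.last (n + 1)) * dist (c i) b := by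
      rw [← Finset.sum_add_distrib, hS, Finset.mul_sum]
      refine Finset.sum_le_sum fun i _ => ?_
      have h1 : r ≤ dist (c i) a + dist (c i) b := by
        rw [← hab, dist_comm (c i) a]; exact dist_triangle a (c i) b
      have h2 := hα i.castSucc (Fin.last (n + 1))
      nlinarith
    have hor : (r / 2) * S ≤ ∑ i : Fin (n + 1), α i.castSucc (Fin.last (n + 1)) * dist (c i) a ∨
        (r / 2) * S ≤ ∑ i : Fin (n + 1), α i.castSucc (Fin.last (n + 1)) * dist (c i) b := by
      by_contra h
      push_neg at h
      linarith [h.1, h.2]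
    have main : ∀ x : M, x = a ∨ x = b →
        (r / 2) * S ≤ ∑ i : Fin (n + 1), α i.castSucc (Fin.last (n + 1)) * dist (c i) x →
        ∃ c' : Fin (n + 2) → M, (∀ i, c' i = a ∨ c' i = b) ∧
          (r / 2) * ∑ j, ∑ i ∈ Finset.Iio j, α i j
            ≤ ∑ j, ∑ i ∈ Finset.Iio j, α i j * dist (c' i) (c' j) := by
      intro x hxab hx
      set c' : Fin (n + 2) → M := Fin.snoc c x with hc'
      refine ⟨c', fun i => ?_, ?_⟩
      · refine Fin.lastCases ?_ ?_ i
        · rw [hc', Fin.snoc_last]; exact hxab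
        · intro i; rw [hc', Fin.snoc_castSucc]; exact hc i
      · have hL := splitsum (n + 1) α
        have hR := splitsum (n + 1)
          (fun i j : Fin (n + 1 + 1) => α i j * dist (c' i) (c' j))
        simp only [hc', Fin.snoc_castSucc, Fin.snoc_last] at hR
        rw [hL, hR, mul_add]
        exact add_le_add hle hx
    obtain hx | hx := hor
    · exact main a (Or.inl rfl) hx
    · exact main b (Or.inr rfl) hx

/-- Given `a, b` at distance `r > 0` and nonnegative weights `α i j` for
`0 ≤ i < j ≤ n`, there is an assignment `c : {0,…,n} → {a,b}` such that
`(r/2) ∑_{i<j} α i j ≤ ∑_{i<j} α i j · d(cᵢ, cⱼ)`. -/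
theorem exists_two_point_assignment {M : Type*} [MetricSpace M]
    (a b : M) (r : ℝ) (hr : 0 < r) (hab : dist a b = r)
    (n : ℕ) (hn : 1 ≤ n) (α : Fin (n + 1) → Fin (n + 1) → ℝ)
    (hα : ∀ i j, 0 ≤ α i j) :
    ∃ c : Fin (n + 1) → M, (∀ i, c i = a ∨ c i = b) ∧
      (r / 2) *
          ∑ q ∈ Finset.univ.filter
            (fun q : Fin (n + 1) × Fin (n + 1) => q.1 < q.2), α q.1 q.2 ≤
        ∑ q ∈ Finset.univ.filter
            (fun q : Fin (n + 1) × Fin (n + 1) => q.1 < q.2),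
          α q.1 q.2 * dist (c q.1) (c q.2) := by
  obtain ⟨c, hc, hle⟩ := aux_two_point a b r hr hab n α hα
  refine ⟨c, hc, ?_⟩
  rw [pairsum (n + 1) α, pairsum (n + 1) (fun i j => α i j * dist (c i) (c j))]
  exact hle
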